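/- Under the setup of the previous statement (F convex with L-Lipschitz gradient, h ∈ (0, 1/L], y⁺ = proj_W(y − hG), d = (1/h)(y − y⁺), Δ = G − ∇F(y), x* ∈ W): ‖y⁺ − x*‖² ≤ ‖y − x*‖² − 2hΔᵀ(y⁺ − x*) − 2h(F(y⁺) − F(x*)). -/

import Mathlib

/-!
Write `u = y - y⁺`. Since `y⁺` is the projection of `y - hG` onto `W ∋ x*`, the obtuse-angle
criterion gives `h⟪G, y⁺ - x*⟫ ≤ ⟪u, y⁺ - x*⟫`. Convexity at `y` and the descent lemma at `y`
give `F y⁺ - F x* ≤ ⟪∇F y, y⁺ - x*⟫ + (L/2)‖u‖²`, and `h L ≤ 1` absorbs the quadratic term into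
the `‖u‖²` of `‖y - x*‖² = ‖u‖² + 2⟪u, y⁺ - x*⟫ + ‖y⁺ - x*‖²`.
-/

open RealInnerProductSpace

section Gradient

variable {E : Type*} [NormedAddCommGroup E] [InnerProductSpace ℝ E] [CompleteSpace E]
  {F : E → ℝ}

theorem HasGradientAt.hasDerivAt_comp_add_smul {g a v : E} {t : ℝ}
    (hF : HasGradientAt F g (a + t • v)) :
    HasDerivAt (fun s : ℝ => F (a + s • v)) ⟪g, v⟫ t := by
  have hline : HasDerivAt (fun s : ℝ => a + s • v) v t := by
    simpa using ((hasDerivAt_id t).smul_const v).const_add a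
  exact (by simpa using hF.hasFDerivAt.comp_hasDerivAt t hline :
    HasDerivAt (F ∘ fun s : ℝ => a + s • v) ⟪g, v⟫ t)

theorem ConvexOn.add_inner_le_of_hasGradientAt {S : Set E} (hconv : ConvexOn ℝ S F)
    {g x z : E} (hx : x ∈ S) (hz : z ∈ S) (hF : HasGradientAt F g x) :
    F x + ⟪g, z - x⟫ ≤ F z := by
  have hline : ConvexOn ℝ (Set.Icc 0 1) (fun t : ℝ => F (x + t • (z - x))) := by
    refine (hconv.comp_affineMap (AffineMap.lineMap x z)).subset ?_ (convex_Icc 0 1) |>.congr ?_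
    · exact fun t ht => hconv.1.lineMap_mem hx hz ht
    · intro t _
      simp [AffineMap.lineMap_apply, add_comm]
  have hderiv : HasDerivAt (fun t : ℝ => F (x + t • (z - x))) ⟪g, z - x⟫ 0 :=
    (by simpa using hF : HasGradientAt F g (x + (0 : ℝ) • (z - x))).hasDerivAt_comp_add_smul
  have := hline.le_slope_of_hasDerivAt (by simp) (by simp) zero_lt_one hderiv
  simp only [slope_def_field, one_smul, zero_smul, add_zero, add_sub_cancel, sub_zero,
    div_one] at this
  linarith

theorem le_add_inner_add_of_lipschitz_gradient {F' : E → E}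
    (hgrad : ∀ x, HasGradientAt F (F' x) x) {L : ℝ}
    (hlip : ∀ x y, ‖F' x - F' y‖ ≤ L * ‖x - y‖) (a b : E) :
    F b ≤ F a + ⟪F' a, b - a⟫ + L / 2 * ‖b - a‖ ^ 2 := by
  set v := b - a
  set φ : ℝ → ℝ := fun t => F (a + t • v) - t * ⟪F' a, v⟫ - L / 2 * t ^ 2 * ‖v‖ ^ 2
  have hφ : ∀ t, HasDerivAt φ (⟪F' (a + t • v) - F' a, v⟫ - L * t * ‖v‖ ^ 2) t := by
    intro t
    have hline : HasDerivAt (fun s : ℝ => F (a + s • v)) ⟪F' (a + t • v), v⟫ t :=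
      (hgrad _).hasDerivAt_comp_add_smul
    have hlin := (hasDerivAt_id t).mul_const ⟪F' a, v⟫
    have hquad := ((hasDerivAt_pow 2 t).const_mul (L / 2)).mul_const (‖v‖ ^ 2)
    refine ((hline.sub hlin).sub hquad).congr_deriv ?_
    simp only [inner_sub_left, one_mul]
    ring
  have hφ'_nonpos : ∀ t ∈ interior (Set.Icc (0 : ℝ) 1),
      ⟪F' (a + t • v) - F' a, v⟫ - L * t * ‖v‖ ^ 2 ≤ 0 := by
    intro t ht
    rw [interior_Icc] at ht
    refine sub_nonpos.2 <| calc
      ⟪F' (a + t • v) - F' a, v⟫ ≤ ‖F' (a + t • v) - F' a‖ * ‖v‖ := real_inner_le_norm _ _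
      _ ≤ L * ‖(a + t • v) - a‖ * ‖v‖ := by gcongr; exact hlip _ _
      _ = L * t * ‖v‖ ^ 2 := by
        rw [add_sub_cancel_left, norm_smul, Real.norm_of_nonneg ht.1.le]
        ring
  have hanti : AntitoneOn φ (Set.Icc 0 1) :=
    antitoneOn_of_hasDerivWithinAt_nonpos (convex_Icc 0 1)
      (fun t _ => (hφ t).continuousAt.continuousWithinAt)
      (fun t _ => (hφ t).hasDerivWithinAt) hφ'_nonpos
  have h01 := hanti (by simp) (by simp) zero_le_one
  simp only [φ, v, zero_smul, add_zero, one_smul, add_sub_cancel] at h01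
  linarith

theorem ConvexOn.sub_le_inner_add_of_lipschitz_gradient {S : Set E} (hconv : ConvexOn ℝ S F)
    {F' : E → E} {a c : E} (ha : a ∈ S) (hc : c ∈ S) (hgrad : ∀ x, HasGradientAt F (F' x) x)
    {L : ℝ} (hlip : ∀ x y, ‖F' x - F' y‖ ≤ L * ‖x - y‖) (b : E) :
    F b - F c ≤ ⟪F' a, b - c⟫ + L / 2 * ‖b - a‖ ^ 2 := by
  have hbelow := hconv.add_inner_le_of_hasGradientAt ha hc (hgrad a)
  have habove := le_add_inner_add_of_lipschitz_gradient hgrad hlip a b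
  rw [← sub_sub_sub_cancel_right b c a, inner_sub_right]
  linarith

end Gradient

theorem real_inner_sub_nonpos_of_forall_norm_sub_le {E : Type*} [NormedAddCommGroup E]
    [InnerProductSpace ℝ E] {K : Set E} (hK : Convex ℝ K) {z p : E} (hp : p ∈ K)
    (hmin : ∀ w ∈ K, ‖p - z‖ ≤ ‖w - z‖) {w : E} (hw : w ∈ K) :
    ⟪z - p, w - p⟫ ≤ 0 := by
  have : Nonempty K := ⟨⟨p, hp⟩⟩
  refine (norm_eq_iInf_iff_real_inner_le_zero hK hp).1 (le_antisymm ?_ ?_) w hw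
  · exact le_ciInf fun u => by simpa only [norm_sub_rev z] using hmin u u.2
  · exact ciInf_le ⟨0, Set.forall_mem_range.2 fun u : K => norm_nonneg (z - u)⟩ ⟨p, hp⟩

theorem stmt_14_general {d : ℕ} (F : EuclideanSpace ℝ (Fin d) → ℝ)
    (F' : EuclideanSpace ℝ (Fin d) → EuclideanSpace ℝ (Fin d))
    (hconv : ConvexOn ℝ Set.univ F)
    (hgrad : ∀ x, HasGradientAt F (F' x) x)
    (L : ℝ)
    (hlip : ∀ x y, ‖F' x - F' y‖ ≤ L * ‖x - y‖)
    (W : Set (EuclideanSpace ℝ (Fin d)))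
    (hconvW : Convex ℝ W)
    (P : EuclideanSpace ℝ (Fin d) → EuclideanSpace ℝ (Fin d))
    (hP : ∀ z, P z ∈ W ∧ ∀ w ∈ W, ‖P z - z‖ ≤ ‖w - z‖)
    (xstar y : EuclideanSpace ℝ (Fin d)) (hxstar : xstar ∈ W)
    (G : EuclideanSpace ℝ (Fin d))
    (h : ℝ) (hh0 : 0 < h) (hhL : h ≤ 1 / L)
    (yplus Δ : EuclideanSpace ℝ (Fin d))
    (hyplus : yplus = P (y - h • G))
    (hΔ : Δ = G - F' y) :
    ‖yplus - xstar‖ ^ 2 ≤ ‖y - xstar‖ ^ 2 - 2 * h * ⟪Δ, yplus - xstar⟫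
      - 2 * h * (F yplus - F xstar) := by
  have hhL' : h * L ≤ 1 := (le_div_iff₀ (one_div_pos.1 (hh0.trans_le hhL))).1 hhL
  have hstep : h * ⟪G, yplus - xstar⟫ ≤ ⟪y - yplus, yplus - xstar⟫ := by
    have hobtuse : ⟪y - h • G - yplus, xstar - yplus⟫ ≤ 0 := by
      subst hyplus
      exact real_inner_sub_nonpos_of_forall_norm_sub_le hconvW (hP _).1 (hP _).2 hxstar
    rw [show y - h • G - yplus = (y - yplus) - h • G by abel, ← neg_sub yplus xstar,
      inner_neg_right, inner_sub_left, real_inner_smul_left] at hobtuse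
    linarith
  have hgap := hconv.sub_le_inner_add_of_lipschitz_gradient (a := y) (c := xstar) trivial trivial
    hgrad hlip yplus
  have hexpand : ‖y - xstar‖ ^ 2
      = ‖y - yplus‖ ^ 2 + 2 * ⟪y - yplus, yplus - xstar⟫ + ‖yplus - xstar‖ ^ 2 := by
    rw [← norm_add_sq_real, sub_add_sub_cancel]
  rw [norm_sub_rev] at hgap
  rw [hΔ, inner_sub_left]
  linear_combination -hexpand + 2 * hstep + 2 * h * hgap + ‖y - yplus‖ ^ 2 * hhL'

theorem stmt_14 {d : ℕ} (F : EuclideanSpace ℝ (Fin d) → ℝ)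
    (F' : EuclideanSpace ℝ (Fin d) → EuclideanSpace ℝ (Fin d))
    (hconv : ConvexOn ℝ Set.univ F)
    (hgrad : ∀ x, HasGradientAt F (F' x) x)
    (L : ℝ) (hL : 0 < L)
    (hlip : ∀ x y, ‖F' x - F' y‖ ≤ L * ‖x - y‖)
    (W : Set (EuclideanSpace ℝ (Fin d)))
    (hne : W.Nonempty) (hcl : IsClosed W) (hconvW : Convex ℝ W)
    (P : EuclideanSpace ℝ (Fin d) → EuclideanSpace ℝ (Fin d))
    (hP : ∀ z, P z ∈ W ∧ ∀ w ∈ W, ‖P z - z‖ ≤ ‖w - z‖)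
    (xstar y : EuclideanSpace ℝ (Fin d)) (hxstar : xstar ∈ W) (hy : y ∈ W)
    (G : EuclideanSpace ℝ (Fin d))
    (h : ℝ) (hh0 : 0 < h) (hhL : h ≤ 1 / L)
    (yplus dvec Δ : EuclideanSpace ℝ (Fin d))
    (hyplus : yplus = P (y - h • G))
    (hdvec : dvec = (1 / h) • (y - yplus))
    (hΔ : Δ = G - F' y) :
    ‖yplus - xstar‖ ^ 2 ≤ ‖y - xstar‖ ^ 2 - 2 * h * ⟪Δ, yplus - xstar⟫
      - 2 * h * (F yplus - F xstar) :=
  stmt_14_general F F' hconv hgrad L hlip W hconvW P hP xstar y hxstar G h hh0 hhL yplus Δ hyplus hΔ
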